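/- Let (Z,d) be a metric space, U a finite nonempty set, β ∈ (0,1) with βα_Z < 1, c : Z×U → ℝ bounded measurable with |c(z,u) − c(z',u)| ≤ ‖c‖_∞ d(z,z') for all z, z' ∈ Z and u ∈ U, and let η be a Markov kernel from Z×U to Z satisfying the bounded-Lipschitz contraction condition with constant α_Z. Let F : Z → Z be measurable with sup_{z∈Z} d(z, F(z)) ≤ L̄ < ∞. Let J* : Z → ℝ be a bounded Lipschitz function satisfying J*(z) = min_{u∈U} ( c(z,u) + β ∫ J*(z₁) η(dz₁|z,u) ) for all z, let J^N : Z → ℝ be a bounded measurable function satisfying J^N(z) = min_{u∈U} ( c(F(z),u) + β ∫ J^N(z₁) η(dz₁|F(z),u) ) for all z, let γ_N : Z → U be a measurable selector with c(F(z),γ_N(z)) + β ∫ J^N(z₁) η(dz₁|F(z),γ_N(z)) = J^N(z) for all z, and let J_{γ_N} : Z → ℝ be a bounded measurable function satisfying J_{γ_N}(z) = c(z,γ_N(z)) + β ∫ J_{γ_N}(z₁) η(dz₁|z,γ_N(z)) for all z. Then sup_{z∈Z} |J_{γ_N}(z) − J^N(z)| ≤ ( (1 + β)((α_Z − 1)β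 + 1) / ((1 − β)³ (1 − α_Z β)) ) ‖c‖_∞ L̄. -/

import Mathlib

open MeasureTheory

noncomputable section

/-- `‖f‖_BL ≤ c` with respect to the distance-like function `d`:
there are `a, b ≥ 0` with `a + b ≤ c` such that `f` is bounded by `a` and
`b`-Lipschitz with respect to `d`. -/
def blNormLE {S : Type*} (d : S → S → ℝ) (f : S → ℝ) (c : ℝ) : Prop :=
  ∃ a b : ℝ, 0 ≤ a ∧ 0 ≤ b ∧ a + b ≤ c ∧ (∀ x, |f x| ≤ a) ∧
    ∀ x y, |f x - f y| ≤ b * d x y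

/-- Sup norm `‖c‖_∞` of a two-variable (stage cost) function. -/
def supNorm {Z U : Type*} (c : Z → U → ℝ) : ℝ :=
  ⨆ p : Z × U, |c p.1 p.2|

/-- The bounded-Lipschitz contraction condition for the kernel `η` with constant `αZ`:
`|∫ f dη(·|z,u) − ∫ f dη(·|z',u)| ≤ αZ ‖f‖_BL d(z,z')` for every bounded Lipschitz `f`. -/
def blContract {Z U : Type*} [MeasurableSpace Z] [MetricSpace Z]
    (η : Z → U → Measure Z) (αZ : ℝ) : Prop :=
  ∀ (f : Z → ℝ) (C : ℝ), blNormLE dist f C → ∀ (u : U) (z z' : Z),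
    |∫ x, f x ∂(η z u) - ∫ x, f x ∂(η z' u)| ≤ αZ * C * dist z z'

end

open Filter Topology

/-!
Write `M = ‖c‖_∞`. The optimal cost `J*` is bounded by `A = M / (1 - β)`, and since the
Bellman operator maps `L`-Lipschitz functions to `(M + βα_Z (A + L))`-Lipschitz ones, the
contraction `L ↦ M + βα_Z A + βα_Z L` forces `J*` to be `K`-Lipschitz with
`K = (M + βα_Z A) / (1 - βα_Z)`. Then `J^N`, the fixed point of the Bellman operator read at
`F(z)`, stays within `K L̄ / (1 - β)` of `J*`. Finally `J_{γ_N} - J^N` satisfies a recursion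
whose inhomogeneous part compares `η(·|z,u)` with `η(·|F(z),u)`; replacing `J^N` by the
bounded-Lipschitz function `J*` there costs `2 K L̄ / (1 - β)` and the kernel condition does
the rest. Each of these bounds is the fixed point of an affine contraction on the constant of
an a priori bound.
-/

theorem le_div_one_sub_mul_of_self_improving {ι : Type*} {g w : ι → ℝ} {a q b : ℝ}
    (hw : ∀ i, 0 ≤ w i) (ha : 0 ≤ a) (hq0 : 0 ≤ q) (hq1 : q < 1)
    (hg : ∀ i, g i ≤ b * w i)
    (hstep : ∀ L, 0 ≤ L → (∀ i, g i ≤ L * w i) → ∀ i, g i ≤ (a + q * L) * w i)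
    (i : ι) : g i ≤ a / (1 - q) * w i := by
  set K := a / (1 - q) with hK
  have hK0 : 0 ≤ K := div_nonneg ha (by linarith)
  have hKfix : a + q * K = K := by
    rw [hK]
    field_simp [(by linarith : (1 - q) ≠ 0)]
    ring
  have hiter : ∀ n : ℕ, ∀ i, g i ≤ (q ^ n * max b 0 + K) * w i := by
    intro n
    induction n with
    | zero =>
      intro i
      nlinarith [hg i, hw i, le_max_left b 0]
    | succ n ih =>
      intro i
      have h := hstep _ (by positivity) ih i
      rwa [mul_add, ← mul_assoc, ← pow_succ', add_left_comm, hKfix] at h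
  have hlim : Tendsto (fun n : ℕ => (q ^ n * max b 0 + K) * w i) atTop (𝓝 (K * w i)) := by
    simpa using
      (((tendsto_pow_atTop_nhds_zero_of_lt_one hq0 hq1).mul_const (max b 0)).add_const K).mul_const
        (w i)
  exact ge_of_tendsto' hlim fun n => hiter n i

theorem le_div_one_sub_of_self_improving {ι : Type*} {g : ι → ℝ} {a q b : ℝ}
    (ha : 0 ≤ a) (hq0 : 0 ≤ q) (hq1 : q < 1) (hg : ∀ i, g i ≤ b)
    (hstep : ∀ L, 0 ≤ L → (∀ i, g i ≤ L) → ∀ i, g i ≤ a + q * L) (i : ι) :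
    g i ≤ a / (1 - q) := by
  simpa using le_div_one_sub_mul_of_self_improving (w := fun _ => 1) (fun _ => zero_le_one)
    ha hq0 hq1 (by simpa using hg) (by simpa using hstep) i

theorem abs_add_mul_le {a b A B β : ℝ} (hβ : 0 ≤ β) (ha : |a| ≤ A) (hb : |b| ≤ B) :
    |a + β * b| ≤ A + β * B :=
  calc |a + β * b| ≤ |a| + β * |b| := by
        simpa [abs_mul, abs_of_nonneg hβ] using abs_add_le a (β * b)
    _ ≤ A + β * B := by gcongr

theorem ciInf_sub_ciInf_le {U : Type*} [Finite U] [Nonempty U] {f g : U → ℝ} {D : ℝ}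
    (h : ∀ u, f u - g u ≤ D) : (⨅ u, f u) - ⨅ u, g u ≤ D := by
  obtain ⟨u, hu⟩ := exists_eq_ciInf_of_finite (f := g)
  have hf : ⨅ v, f v ≤ f u := ciInf_le (Finite.bddBelow_range f) u
  linarith [h u]

theorem abs_ciInf_sub_ciInf_le {U : Type*} [Finite U] [Nonempty U] {f g : U → ℝ} {D : ℝ}
    (h : ∀ u, |f u - g u| ≤ D) : |(⨅ u, f u) - ⨅ u, g u| ≤ D :=
  abs_sub_le_iff.2
    ⟨ciInf_sub_ciInf_le fun u => (abs_le.1 (h u)).2,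
      ciInf_sub_ciInf_le fun u => by linarith [(abs_le.1 (h u)).1]⟩

section Integral

variable {α : Type*} [MeasurableSpace α] {μ : Measure α}

theorem integrable_of_abs_le [IsFiniteMeasure μ] {f : α → ℝ} {B : ℝ} (hf : Measurable f)
    (hB : ∀ x, |f x| ≤ B) : Integrable f μ :=
  Integrable.of_bound hf.aestronglyMeasurable B (Eventually.of_forall hB)

variable [IsProbabilityMeasure μ]

theorem abs_integral_le_of_abs_le {f : α → ℝ} {C : ℝ} (h : ∀ x, |f x| ≤ C) :
    |∫ x, f x ∂μ| ≤ C := by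
  simpa using norm_integral_le_of_norm_le_const (μ := μ) (f := f) (Eventually.of_forall h)

theorem abs_integral_sub_integral_le {f g : α → ℝ} {C : ℝ} (hf : Integrable f μ)
    (hg : Integrable g μ) (h : ∀ x, |f x - g x| ≤ C) :
    |∫ x, f x ∂μ - ∫ x, g x ∂μ| ≤ C := by
  rw [← integral_sub hf hg]
  exact abs_integral_le_of_abs_le h

end Integral

section BoundedLipschitz

variable {Z : Type*} [MetricSpace Z] {f : Z → ℝ} {C : ℝ}

theorem blNormLE.nonneg (h : blNormLE dist f C) : 0 ≤ C := by
  obtain ⟨a, b, ha, hb, hab, -⟩ := h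
  linarith

theorem blNormLE.continuous (h : blNormLE dist f C) : Continuous f := by
  obtain ⟨-, b, -, -, -, -, hlip⟩ := h
  exact (LipschitzWith.of_dist_le' (K := b) hlip).continuous

theorem blNormLE.abs_le (h : blNormLE dist f C) (x : Z) : |f x| ≤ C := by
  obtain ⟨a, b, -, hb, hab, hf, -⟩ := h
  linarith [hf x]

theorem blNormLE.abs_le_of_abs_sub_le {g : Z → ℝ} {ε : ℝ} (h : blNormLE dist f C)
    (hgf : ∀ x, |g x - f x| ≤ ε) (x : Z) : |g x| ≤ ε + C := by
  linarith [abs_sub_abs_le_abs_sub (g x) (f x), hgf x, h.abs_le x]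

end BoundedLipschitz

theorem abs_le_supNorm {Z U : Type*} {c : Z → U → ℝ} (hc : ∃ M, ∀ z u, |c z u| ≤ M)
    (z : Z) (u : U) : |c z u| ≤ supNorm c := by
  obtain ⟨M, hM⟩ := hc
  exact le_ciSup (f := fun p : Z × U => |c p.1 p.2|)
    ⟨M, by rintro _ ⟨p, rfl⟩; exact hM _ _⟩ (z, u)

theorem supNorm_nonneg {Z U : Type*} (c : Z → U → ℝ) : 0 ≤ supNorm c :=
  Real.iSup_nonneg fun _ => abs_nonneg _

theorem abs_integral_sub_integral_le_of_abs_sub_le {Z U : Type*} [MeasurableSpace Z]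
    [MetricSpace Z] {η : Z → U → Measure Z} [∀ z u, IsProbabilityMeasure (η z u)]
    {α C ε : ℝ} (hη : blContract η α) {f g : Z → ℝ}
    (hf : Measurable f) (hg : Measurable g) (hg_bl : blNormLE dist g C)
    (hfg : ∀ x, |f x - g x| ≤ ε) (u : U) (z z' : Z) :
    |∫ x, f x ∂(η z u) - ∫ x, f x ∂(η z' u)| ≤ 2 * ε + α * C * dist z z' := by
  have hclose (μ : Measure Z) [IsProbabilityMeasure μ] :
      |∫ x, f x ∂μ - ∫ x, g x ∂μ| ≤ ε :=
    abs_integral_sub_integral_le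
      (integrable_of_abs_le hf (hg_bl.abs_le_of_abs_sub_le hfg))
      (integrable_of_abs_le hg hg_bl.abs_le) hfg
  have h₁ := hclose (η z u)
  have h₂ := hclose (η z' u)
  have h₃ := hη g C hg_bl u z z'
  calc _ ≤ |∫ x, f x ∂(η z u) - ∫ x, g x ∂(η z u)|
          + (|∫ x, g x ∂(η z u) - ∫ x, g x ∂(η z' u)|
            + |∫ x, g x ∂(η z' u) - ∫ x, f x ∂(η z' u)|) :=
        (abs_sub_le _ _ _).trans (add_le_add_right (abs_sub_le _ _ _) _)
    _ ≤ ε + (α * C * dist z z' + ε) := by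
        gcongr
        rwa [abs_sub_comm]
    _ = _ := by ring

section Bellman

variable {Z U : Type*} [MeasurableSpace Z]
  {η : Z → U → Measure Z} {c : Z → U → ℝ} {β : ℝ}

theorem abs_le_of_eq_ciInf_bellman [Finite U] [Nonempty U]
    [∀ z u, IsProbabilityMeasure (η z u)] {J : Z → ℝ} {M B : ℝ}
    (hβ0 : 0 ≤ β) (hβ1 : β < 1) (hc : ∀ z u, |c z u| ≤ M) (hJ : ∀ z, |J z| ≤ B)
    (hfix : ∀ z, J z = ⨅ u, (c z u + β * ∫ x, J x ∂(η z u))) (z : Z) :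
    |J z| ≤ M / (1 - β) := by
  have hM : 0 ≤ M := (abs_nonneg _).trans (hc z (Classical.arbitrary U))
  refine le_div_one_sub_of_self_improving hM hβ0 hβ1 hJ (fun L _ hL z => ?_) z
  obtain ⟨u, hu⟩ :=
    exists_eq_ciInf_of_finite (f := fun u => c z u + β * ∫ x, J x ∂(η z u))
  rw [hfix z, ← hu]
  exact abs_add_mul_le hβ0 (hc z u) (abs_integral_le_of_abs_le hL)

theorem abs_sub_le_mul_dist_of_eq_ciInf_bellman [Finite U] [Nonempty U] [MetricSpace Z]
    {J : Z → ℝ} {α Lc A C : ℝ} (hβ0 : 0 ≤ β) (hα : 0 ≤ α) (hβα : β * α < 1)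
    (hLc : 0 ≤ Lc)
    (hc_lip : ∀ z z' u, |c z u - c z' u| ≤ Lc * dist z z') (hη : blContract η α)
    (hJ_bl : blNormLE dist J C) (hJ_bdd : ∀ z, |J z| ≤ A)
    (hfix : ∀ z, J z = ⨅ u, (c z u + β * ∫ x, J x ∂(η z u))) (x y : Z) :
    |J x - J y| ≤ (Lc + β * α * A) / (1 - β * α) * dist x y := by
  have hA : 0 ≤ A := (abs_nonneg _).trans (hJ_bdd x)
  obtain ⟨-, b, -, -, -, -, hJ_lip⟩ := hJ_bl
  refine le_div_one_sub_mul_of_self_improving (g := fun p : Z × Z => |J p.1 - J p.2|)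
    (w := fun p => dist p.1 p.2) (fun _ => dist_nonneg) (by positivity) (by positivity) hβα
    (fun p => hJ_lip p.1 p.2) (fun L hL hL_lip p => ?_) (x, y)
  have hJ_bl' : blNormLE dist J (A + L) :=
    ⟨A, L, hA, hL, le_rfl, hJ_bdd, fun x y => hL_lip (x, y)⟩
  rw [hfix p.1, hfix p.2]
  refine abs_ciInf_sub_ciInf_le fun u => ?_
  calc _ = |(c p.1 u - c p.2 u) + β * (∫ x, J x ∂(η p.1 u) - ∫ x, J x ∂(η p.2 u))| := by
        congr 1; ring
    _ ≤ Lc * dist p.1 p.2 + β * (α * (A + L) * dist p.1 p.2) :=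
        abs_add_mul_le hβ0 (hc_lip p.1 p.2 u) (hη J _ hJ_bl' u p.1 p.2)
    _ = _ := by ring

theorem abs_sub_le_of_eq_ciInf_bellman_comp [Finite U] [Nonempty U] [MetricSpace Z]
    [∀ z u, IsProbabilityMeasure (η z u)]
    {J J' : Z → ℝ} {F : Z → Z} {K Lbar B B' : ℝ} (hβ0 : 0 ≤ β) (hβ1 : β < 1)
    (hJ_meas : Measurable J) (hJ_bdd : ∀ z, |J z| ≤ B)
    (hJ'_meas : Measurable J') (hJ'_bdd : ∀ z, |J' z| ≤ B')
    (hK : 0 ≤ K) (hJ_lip : ∀ x y, |J x - J y| ≤ K * dist x y)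
    (hF : ∀ z, dist z (F z) ≤ Lbar)
    (hfix : ∀ z, J z = ⨅ u, (c z u + β * ∫ x, J x ∂(η z u)))
    (hfix' : ∀ z, J' z = ⨅ u, (c (F z) u + β * ∫ x, J' x ∂(η (F z) u))) (z : Z) :
    |J' z - J z| ≤ K * Lbar / (1 - β) := by
  have hLbar : 0 ≤ Lbar := dist_nonneg.trans (hF z)
  refine le_div_one_sub_of_self_improving (g := fun z => |J' z - J z|) (by positivity) hβ0 hβ1
    (fun z => (abs_sub _ _).trans (add_le_add (hJ'_bdd z) (hJ_bdd z))) (fun L _ hL z => ?_) z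
  have hnext : |J' z - J (F z)| ≤ β * L := by
    rw [hfix' z, hfix (F z)]
    refine abs_ciInf_sub_ciInf_le fun u => ?_
    rw [add_sub_add_left_eq_sub, ← mul_sub, abs_mul, abs_of_nonneg hβ0]
    exact mul_le_mul_of_nonneg_left (abs_integral_sub_integral_le
      (integrable_of_abs_le hJ'_meas hJ'_bdd) (integrable_of_abs_le hJ_meas hJ_bdd) hL) hβ0
  have hshift : |J (F z) - J z| ≤ K * Lbar :=
    (hJ_lip _ _).trans (mul_le_mul_of_nonneg_left ((dist_comm _ _).trans_le (hF z)) hK)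
  calc |J' z - J z| ≤ |J' z - J (F z)| + |J (F z) - J z| := abs_sub_le _ _ _
    _ ≤ K * Lbar + β * L := by linarith

theorem abs_sub_le_of_policy_eval [MetricSpace Z] [∀ z u, IsProbabilityMeasure (η z u)]
    {Jγ J' g : Z → ℝ} {γ : Z → U} {F : Z → Z} {Lc α C ε Lbar B : ℝ} (hβ0 : 0 ≤ β)
    (hβ1 : β < 1) (hα : 0 ≤ α) (hLc : 0 ≤ Lc)
    (hc_lip : ∀ z z' u, |c z u - c z' u| ≤ Lc * dist z z') (hη : blContract η α)
    (hF : ∀ z, dist z (F z) ≤ Lbar) (hJγ_meas : Measurable Jγ)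
    (hJγ_bdd : ∀ z, |Jγ z| ≤ B)
    (hJ'_meas : Measurable J') (hg_meas : Measurable g) (hg_bl : blNormLE dist g C)
    (hJ'g : ∀ z, |J' z - g z| ≤ ε)
    (hsel : ∀ z, c (F z) (γ z) + β * ∫ x, J' x ∂(η (F z) (γ z)) = J' z)
    (hfix : ∀ z, Jγ z = c z (γ z) + β * ∫ x, Jγ x ∂(η z (γ z))) (z : Z) :
    |Jγ z - J' z| ≤ (Lc * Lbar + β * (α * C * Lbar + 2 * ε)) / (1 - β) := by
  have hLbar : 0 ≤ Lbar := dist_nonneg.trans (hF z)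
  have hε : 0 ≤ ε := (abs_nonneg _).trans (hJ'g z)
  have hC : 0 ≤ C := hg_bl.nonneg
  have hJ'_bdd := hg_bl.abs_le_of_abs_sub_le hJ'g
  refine le_div_one_sub_of_self_improving (g := fun z => |Jγ z - J' z|) (by positivity) hβ0 hβ1
    (fun z => (abs_sub _ _).trans (add_le_add (hJγ_bdd z) (hJ'_bdd z))) (fun L _ hL z => ?_) z
  have hcost : |c z (γ z) - c (F z) (γ z)| ≤ Lc * Lbar :=
    (hc_lip _ _ _).trans (mul_le_mul_of_nonneg_left (hF z) hLc)
  have hvalue : |∫ x, Jγ x ∂(η z (γ z)) - ∫ x, J' x ∂(η z (γ z))| ≤ L :=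
    abs_integral_sub_integral_le (integrable_of_abs_le hJγ_meas hJγ_bdd)
      (integrable_of_abs_le hJ'_meas hJ'_bdd) hL
  have hkernel : |∫ x, J' x ∂(η z (γ z)) - ∫ x, J' x ∂(η (F z) (γ z))|
      ≤ 2 * ε + α * C * Lbar :=
    (abs_integral_sub_integral_le_of_abs_sub_le hη hJ'_meas hg_meas hg_bl hJ'g _ _ _).trans
      (by gcongr; exact hF z)
  calc |Jγ z - J' z|
      = |(c z (γ z) - c (F z) (γ z))
          + β * ((∫ x, Jγ x ∂(η z (γ z)) - ∫ x, J' x ∂(η z (γ z)))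
          + (∫ x, J' x ∂(η z (γ z)) - ∫ x, J' x ∂(η (F z) (γ z))))| := by
        rw [hfix z, ← hsel z]; ring_nf
    _ ≤ Lc * Lbar + β * (L + (2 * ε + α * C * Lbar)) :=
        abs_add_mul_le hβ0 hcost ((abs_add_le _ _).trans (add_le_add hvalue hkernel))
    _ = Lc * Lbar + β * (α * C * Lbar + 2 * ε) + β * L := by ring

end Bellman

theorem statement12_general {Z U : Type*} [MetricSpace Z] [MeasurableSpace Z] [BorelSpace Z]
    [Fintype U] [Nonempty U]
    (β : ℝ) (hβ0 : 0 < β) (hβ1 : β < 1)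
    (c : Z → U → ℝ)
    (hc_bdd : ∃ M : ℝ, ∀ (z : Z) (u : U), |c z u| ≤ M)
    (hc_lip : ∀ (z z' : Z) (u : U), |c z u - c z' u| ≤ supNorm c * dist z z')
    (η : Z → U → MeasureTheory.Measure Z)
    (hη_prob : ∀ (z : Z) (u : U), MeasureTheory.IsProbabilityMeasure (η z u))
    (αZ : ℝ) (hαZ : 0 ≤ αZ)
    (hη_contract : blContract η αZ)
    (hβαZ : β * αZ < 1)
    (F : Z → Z)
    (Lbar : ℝ) (hF_close : ∀ z : Z, dist z (F z) ≤ Lbar)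
    (Jstar : Z → ℝ)
    (hJstar_bl : ∃ C : ℝ, blNormLE dist Jstar C)
    (hJstar_fix : ∀ z : Z, Jstar z = ⨅ u : U, (c z u + β * ∫ z₁, Jstar z₁ ∂(η z u)))
    (JN : Z → ℝ)
    (hJN_meas : Measurable JN)
    (hJN_bdd : ∃ M : ℝ, ∀ z : Z, |JN z| ≤ M)
    (hJN_fix : ∀ z : Z, JN z = ⨅ u : U, (c (F z) u + β * ∫ z₁, JN z₁ ∂(η (F z) u)))
    (γN : Z → U)
    (hγN_sel : ∀ z : Z,
      c (F z) (γN z) + β * ∫ z₁, JN z₁ ∂(η (F z) (γN z)) = JN z)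
    (JγN : Z → ℝ)
    (hJγN_meas : Measurable JγN)
    (hJγN_bdd : ∃ M : ℝ, ∀ z : Z, |JγN z| ≤ M)
    (hJγN_fix : ∀ z : Z,
      JγN z = c z (γN z) + β * ∫ z₁, JγN z₁ ∂(η z (γN z))) :
    ∀ z : Z, |JγN z - JN z| ≤
      (1 + β) * ((αZ - 1) * β + 1) / ((1 - β) ^ 3 * (1 - αZ * β)) * supNorm c * Lbar := by
  obtain ⟨C₀, hJstar_bl⟩ := hJstar_bl
  obtain ⟨BN, hJN_bdd⟩ := hJN_bdd
  obtain ⟨Bγ, hJγN_bdd⟩ := hJγN_bdd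
  have hM := supNorm_nonneg c
  have hJstar_meas : Measurable Jstar := hJstar_bl.continuous.measurable
  set A := supNorm c / (1 - β) with hA
  set K := (supNorm c + β * αZ * A) / (1 - β * αZ) with hK
  have hA0 : 0 ≤ A := div_nonneg hM (by linarith)
  have hK0 : 0 ≤ K := div_nonneg (by positivity) (by linarith)
  have hJstar_bdd : ∀ z, |Jstar z| ≤ A :=
    abs_le_of_eq_ciInf_bellman hβ0.le hβ1 (abs_le_supNorm hc_bdd) hJstar_bl.abs_le hJstar_fix
  have hJstar_lip : ∀ x y, |Jstar x - Jstar y| ≤ K * dist x y :=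
    abs_sub_le_mul_dist_of_eq_ciInf_bellman hβ0.le hαZ hβαZ hM hc_lip hη_contract hJstar_bl
      hJstar_bdd hJstar_fix
  have hJN_near : ∀ z, |JN z - Jstar z| ≤ K * Lbar / (1 - β) :=
    abs_sub_le_of_eq_ciInf_bellman_comp hβ0.le hβ1 hJstar_meas hJstar_bdd hJN_meas hJN_bdd hK0
      hJstar_lip hF_close hJstar_fix hJN_fix
  intro z
  calc |JγN z - JN z|
      ≤ (supNorm c * Lbar + β * (αZ * (A + K) * Lbar + 2 * (K * Lbar / (1 - β)))) / (1 - β) :=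
        abs_sub_le_of_policy_eval hβ0.le hβ1 hαZ hM hc_lip hη_contract hF_close hJγN_meas
          hJγN_bdd hJN_meas hJstar_meas ⟨A, K, hA0, hK0, le_rfl, hJstar_bdd, hJstar_lip⟩
          hJN_near hγN_sel hJγN_fix z
    _ = _ := by
        have : 1 - β ≠ 0 := by linarith
        have : 1 - β * αZ ≠ 0 := by linarith
        have : 1 - αZ * β ≠ 0 := by linarith
        rw [hK, hA]
        field_simp
        ring

theorem statement12 {Z U : Type*} [MetricSpace Z] [MeasurableSpace Z] [BorelSpace Z]
    [Fintype U] [Nonempty U] [MeasurableSpace U]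
    (β : ℝ) (hβ0 : 0 < β) (hβ1 : β < 1)
    (c : Z → U → ℝ)
    (hc_meas : ∀ u : U, Measurable fun z : Z => c z u)
    (hc_bdd : ∃ M : ℝ, ∀ (z : Z) (u : U), |c z u| ≤ M)
    (hc_lip : ∀ (z z' : Z) (u : U), |c z u - c z' u| ≤ supNorm c * dist z z')
    (η : Z → U → MeasureTheory.Measure Z)
    (hη_meas : ∀ u : U, Measurable fun z : Z => η z u)
    (hη_prob : ∀ (z : Z) (u : U), MeasureTheory.IsProbabilityMeasure (η z u))
    (αZ : ℝ) (hαZ : 0 ≤ αZ)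
    (hη_contract : blContract η αZ)
    (hβαZ : β * αZ < 1)
    (F : Z → Z) (hF_meas : Measurable F)
    (Lbar : ℝ) (hF_close : ∀ z : Z, dist z (F z) ≤ Lbar)
    (Jstar : Z → ℝ)
    (hJstar_bl : ∃ C : ℝ, blNormLE dist Jstar C)
    (hJstar_fix : ∀ z : Z, Jstar z = ⨅ u : U, (c z u + β * ∫ z₁, Jstar z₁ ∂(η z u)))
    (JN : Z → ℝ)
    (hJN_meas : Measurable JN)
    (hJN_bdd : ∃ M : ℝ, ∀ z : Z, |JN z| ≤ M)
    (hJN_fix : ∀ z : Z, JN z = ⨅ u : U, (c (F z) u + β * ∫ z₁, JN z₁ ∂(η (F z) u)))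
    (γN : Z → U) (hγN_meas : Measurable γN)
    (hγN_sel : ∀ z : Z,
      c (F z) (γN z) + β * ∫ z₁, JN z₁ ∂(η (F z) (γN z)) = JN z)
    (JγN : Z → ℝ)
    (hJγN_meas : Measurable JγN)
    (hJγN_bdd : ∃ M : ℝ, ∀ z : Z, |JγN z| ≤ M)
    (hJγN_fix : ∀ z : Z,
      JγN z = c z (γN z) + β * ∫ z₁, JγN z₁ ∂(η z (γN z))) :
    ∀ z : Z, |JγN z - JN z| ≤
      (1 + β) * ((αZ - 1) * β + 1) / ((1 - β) ^ 3 * (1 - αZ * β)) * supNorm c * Lbar :=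
  statement12_general β hβ0 hβ1 c hc_bdd hc_lip η hη_prob αZ hαZ hη_contract hβαZ F Lbar hF_close
    Jstar hJstar_bl hJstar_fix JN hJN_meas hJN_bdd hJN_fix γN hγN_sel JγN hJγN_meas hJγN_bdd
    hJγN_fix
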